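/- A geodesic metric space X is δ-hyperbolic for some δ if and only if for every C > 0 there exists C' > 0 such that whenever A and B are (1, C)-quasigeodesic subspaces of X with A ∩ B ≠ ∅, the union A ∪ B is a (1, C')-quasigeodesic subspace of X. -/

import Mathlib

/-- `f` restricted to `[0, v]` is a (unit-speed) geodesic: `v ≥ 0` and `f` is an
isometric embedding of `[0, v]` into `X`. -/
def IsGeodesicOn {X : Type*} [MetricSpace X] (f : ℝ → X) (v : ℝ) : Prop :=
  0 ≤ v ∧ ∀ x ∈ Set.Icc (0 : ℝ) v, ∀ y ∈ Set.Icc (0 : ℝ) v, dist (f x) (f y) = |x - y|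

/-- `f : [0, v] → X` is a geodesic from `a` to `b`. -/
def IsGeodesicFrom {X : Type*} [MetricSpace X] (f : ℝ → X) (v : ℝ) (a b : X) : Prop :=
  IsGeodesicOn f v ∧ f 0 = a ∧ f v = b

/-- `X` is a geodesic metric space: any two points are joined by a geodesic. -/
def IsGeodesicSpace (X : Type*) [MetricSpace X] : Prop :=
  ∀ a b : X, ∃ (f : ℝ → X) (v : ℝ), IsGeodesicFrom f v a b

/-- `X` is δ-hyperbolic (in the sense of Gromov, via thin triangles): for any geodesic
triangle with vertices `a`, `b`, `c`, the side `[b, c]` lies in the δ-neighbourhood of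
the union of the sides `[a, b]` and `[a, c]`. -/
def IsDeltaHyperbolic (X : Type*) [MetricSpace X] (δ : ℝ) : Prop :=
  ∀ (a b c : X) (f₁ f₂ f₃ : ℝ → X) (v₁ v₂ v₃ : ℝ),
    IsGeodesicFrom f₁ v₁ a b → IsGeodesicFrom f₂ v₂ b c → IsGeodesicFrom f₃ v₃ a c →
    ∀ x ∈ Set.Icc (0 : ℝ) v₂,
      Metric.infDist (f₂ x) (f₁ '' Set.Icc (0 : ℝ) v₁ ∪ f₃ '' Set.Icc (0 : ℝ) v₃) ≤ δ

/-- `A` is a geodesic subspace of `X`: any two points of `A` are joined by a geodesic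
whose image lies in `A`. -/
def IsGeodesicSubspace {X : Type*} [MetricSpace X] (A : Set X) : Prop :=
  ∀ a ∈ A, ∀ b ∈ A, ∃ (f : ℝ → X) (v : ℝ),
    IsGeodesicFrom f v a b ∧ f '' Set.Icc (0 : ℝ) v ⊆ A

/-- `f` restricted to `[0, v]` is a `(lam, C)`-quasigeodesic. -/
def IsQuasigeodesicOn {X : Type*} [MetricSpace X] (lam C : ℝ) (f : ℝ → X) (v : ℝ) : Prop :=
  0 ≤ v ∧ ∀ x ∈ Set.Icc (0 : ℝ) v, ∀ y ∈ Set.Icc (0 : ℝ) v,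
    lam⁻¹ * |x - y| - C ≤ dist (f x) (f y) ∧ dist (f x) (f y) ≤ lam * |x - y| + C

/-- `A` is a `(lam, C)`-quasigeodesic subspace of `X`: any two points of `A` are joined
by a `(lam, C)`-quasigeodesic whose image lies in `A`. -/
def IsQuasigeodesicSubspace {X : Type*} [MetricSpace X] (lam C : ℝ) (A : Set X) : Prop :=
  ∀ a ∈ A, ∀ b ∈ A, ∃ (f : ℝ → X) (v : ℝ),
    IsQuasigeodesicOn lam C f v ∧ f 0 = a ∧ f v = b ∧ f '' Set.Icc (0 : ℝ) v ⊆ A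

/-- `S` is a geodesic segment: the image of an isometric embedding of a closed interval. -/
def IsGeodesicSegment {X : Type*} [MetricSpace X] (S : Set X) : Prop :=
  ∃ (f : ℝ → X) (v : ℝ), IsGeodesicOn f v ∧ S = f '' Set.Icc (0 : ℝ) v


/-!
If `X` is `δ`-hyperbolic and `p ∈ A ∩ B`, take `a, b ∈ A ∪ B` and a geodesic `[a, b]`. By thin
triangles every point of `[a, b]` is close to `[p, a] ∪ [p, b]`, and in a hyperbolic space a
geodesic stays uniformly close to any `(1, C)`-quasigeodesic with the same endpoints. So `[a, b]`
lies in a bounded neighbourhood of `A ∪ B`, and moving each of its points to a nearby point of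
`A ∪ B` gives a `(1, C')`-quasigeodesic in `A ∪ B`.

Conversely, for a geodesic triangle `a, b, c` and `x ∈ [b, c]`, the union `U = [a, b] ∪ [a, c]` is a
`(1, K₁)`-quasigeodesic subspace, and so is `[b, x] ∪ U`. A `(1, K₂)`-quasigeodesic from `x` to `c`
in `[b, x] ∪ U` must jump from `[b, x]` to `U` somewhere, and being almost length-minimising it
cannot first backtrack along `[b, x]` by more than `2 K₂`; so `x` is `3 K₂`-close to `U`.
-/

open Set Metric

lemma exists_abs_sub_le_of_Icc_subset_union {P Q : Set ℝ} {a b ε : ℝ} (hab : a ≤ b) (hε : 0 < ε)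
    (ha : a ∈ P) (hb : b ∈ Q) (hPQ : Icc a b ⊆ P ∪ Q) :
    ∃ s ∈ Icc a b ∩ P, ∃ t ∈ Icc a b ∩ Q, |s - t| ≤ ε := by
  set S := Icc a b ∩ P
  have haS : a ∈ S := ⟨left_mem_Icc.2 hab, ha⟩
  have hS : BddAbove S := ⟨b, fun s hs => hs.1.2⟩
  have hsupS : sSup S ∈ Icc a b := ⟨le_csSup hS haS, csSup_le ⟨a, haS⟩ fun s hs => hs.1.2⟩
  obtain ⟨s, hs, hslt⟩ := exists_lt_of_lt_csSup ⟨a, haS⟩ (sub_lt_self (sSup S) (half_pos hε))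
  have hs_le : s ≤ sSup S := le_csSup hS hs
  set t := min (sSup S + ε / 2) b
  have ht : t ∈ Icc a b := ⟨le_min (by linarith [hsupS.1]) hab, min_le_right _ _⟩
  have htQ : t ∈ Q := by
    rcases eq_or_ne t b with htb | htb
    · exact htb ▸ hb
    refine (hPQ ht).resolve_left fun htP => ?_
    have : t = sSup S + ε / 2 := (min_choice _ _).resolve_right htb
    linarith [le_csSup hS ⟨ht, htP⟩]
  refine ⟨s, hs, t, ⟨ht, htQ⟩, abs_le.2 ⟨?_, ?_⟩⟩
  · linarith [min_le_left (sSup S + ε / 2) b]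
  · linarith [le_min (by linarith : s ≤ sSup S + ε / 2) hs.1.2]

lemma intermediate_value_Icc_coarse {φ : ℝ → ℝ} {w C u : ℝ} (hw : 0 ≤ w)
    (hφ : ∀ s ∈ Icc 0 w, ∀ t ∈ Icc 0 w, |φ s - φ t| ≤ |s - t| + C)
    (h0 : φ 0 ≤ u) (hu : u ≤ φ w) : ∃ t ∈ Icc 0 w, |φ t - u| ≤ 1 + C := by
  obtain ⟨s, ⟨hs, hsu : φ s ≤ u⟩, t, ⟨ht, htu : u ≤ φ t⟩, hst⟩ :=
    exists_abs_sub_le_of_Icc_subset_union (P := {t | φ t ≤ u}) (Q := {t | u ≤ φ t}) hw one_pos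
      h0 hu fun t _ => le_total (φ t) u
  have hC : 0 ≤ C := by simpa using hφ s hs s hs
  have hts := (abs_le.1 (hφ t ht s hs)).2
  exact ⟨s, hs, abs_le.2 ⟨by linarith [abs_sub_comm t s], by linarith⟩⟩

namespace IsGeodesicOn

variable {X : Type*} [MetricSpace X] {f : ℝ → X} {v x y : ℝ}

lemma dist_eq (hf : IsGeodesicOn f v) (hx : x ∈ Icc 0 v) (hy : y ∈ Icc 0 v) :
    dist (f x) (f y) = |x - y| :=
  hf.2 x hx y hy

lemma dist_left (hf : IsGeodesicOn f v) (hx : x ∈ Icc 0 v) : dist (f 0) (f x) = x := by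
  rw [hf.dist_eq (left_mem_Icc.2 hf.1) hx, zero_sub, abs_neg, abs_of_nonneg hx.1]

lemma dist_right (hf : IsGeodesicOn f v) (hx : x ∈ Icc 0 v) : dist (f x) (f v) = v - x := by
  rw [hf.dist_eq hx (right_mem_Icc.2 hf.1), abs_sub_comm, abs_of_nonneg (sub_nonneg.2 hx.2)]

lemma mono (hf : IsGeodesicOn f v) (hx : x ∈ Icc 0 v) : IsGeodesicOn f x :=
  ⟨hx.1, fun _ hy _ hz => hf.dist_eq ⟨hy.1, hy.2.trans hx.2⟩ ⟨hz.1, hz.2.trans hx.2⟩⟩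

lemma isQuasigeodesicOn (hf : IsGeodesicOn f v) : IsQuasigeodesicOn 1 0 f v :=
  ⟨hf.1, fun x hx y hy => by simp [hf.dist_eq hx hy]⟩

lemma isQuasigeodesicOn_of_dist_le {F : ℝ → X} {K : ℝ} (hf : IsGeodesicOn f v)
    (hF : ∀ x ∈ Icc 0 v, dist (f x) (F x) ≤ K) : IsQuasigeodesicOn 1 (2 * K) F v := by
  refine ⟨hf.1, fun x hx y hy => ?_⟩
  have hxF := hF x hx
  have hyF := hF y hy
  have h₁ := dist_triangle4 (f x) (F x) (F y) (f y)
  have h₂ := dist_triangle4 (F x) (f x) (f y) (F y)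
  rw [hf.dist_eq hx hy, dist_comm (F y)] at h₁
  rw [hf.dist_eq hx hy, dist_comm (F x) (f x)] at h₂
  simp only [inv_one, one_mul]
  constructor <;> linarith

end IsGeodesicOn

namespace IsGeodesicFrom

variable {X : Type*} [MetricSpace X] {f : ℝ → X} {v : ℝ} {a b : X}

lemma dist_eq (hf : IsGeodesicFrom f v a b) : dist a b = v := by
  rw [← hf.2.1, ← hf.2.2, hf.1.dist_left (right_mem_Icc.2 hf.1.1)]

lemma reverse (hf : IsGeodesicFrom f v a b) : IsGeodesicFrom (fun t => f (v - t)) v b a := by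
  refine ⟨⟨hf.1.1, fun x hx y hy => ?_⟩, by simpa using hf.2.2, by simpa using hf.2.1⟩
  have hmem : ∀ t ∈ Icc 0 v, v - t ∈ Icc 0 v := fun t ht =>
    ⟨by linarith [ht.2], by linarith [ht.1]⟩
  rw [hf.1.dist_eq (hmem x hx) (hmem y hy),
    show v - x - (v - y) = -(x - y) by ring, abs_neg]

end IsGeodesicFrom

lemma IsGeodesicOn.isGeodesicSubspace_image {X : Type*} [MetricSpace X] {f : ℝ → X} {v : ℝ}
    (hf : IsGeodesicOn f v) : IsGeodesicSubspace (f '' Icc 0 v) := by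
  rintro _ ⟨y, hy, rfl⟩ _ ⟨y', hy', rfl⟩
  wlog hle : y ≤ y' generalizing y y'
  · obtain ⟨g, w, hg, himg⟩ := this y' hy' y hy (le_of_not_ge hle)
    refine ⟨fun t => g (w - t), w, hg.reverse, ?_⟩
    rintro _ ⟨t, ht, rfl⟩
    exact himg ⟨w - t, ⟨by linarith [ht.2], by linarith [ht.1]⟩, rfl⟩
  have hmem : ∀ t ∈ Icc 0 (y' - y), y + t ∈ Icc 0 v := fun t ht =>
    ⟨by linarith [hy.1, ht.1], by linarith [hy'.2, ht.2]⟩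
  refine ⟨fun t => f (y + t), y' - y,
    ⟨⟨sub_nonneg.2 hle, fun s hs t ht => ?_⟩, by simp, by simp⟩, ?_⟩
  · rw [hf.dist_eq (hmem s hs) (hmem t ht), add_sub_add_left_eq_sub]
  · rintro _ ⟨t, ht, rfl⟩
    exact ⟨y + t, hmem t ht, rfl⟩

namespace IsQuasigeodesicOn

variable {X : Type*} [MetricSpace X] {f : ℝ → X} {C v x y : ℝ}

lemma mono {lam C' : ℝ} (hf : IsQuasigeodesicOn lam C f v) (hC : C ≤ C') :
    IsQuasigeodesicOn lam C' f v :=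
  ⟨hf.1, fun x hx y hy => ⟨by linarith [(hf.2 x hx y hy).1], by linarith [(hf.2 x hx y hy).2]⟩⟩

lemma dist_le (hf : IsQuasigeodesicOn 1 C f v) (hx : x ∈ Icc 0 v) (hy : y ∈ Icc 0 v) :
    dist (f x) (f y) ≤ |x - y| + C := by
  simpa using (hf.2 x hx y hy).2

lemma le_dist (hf : IsQuasigeodesicOn 1 C f v) (hx : x ∈ Icc 0 v) (hy : y ∈ Icc 0 v) :
    |x - y| - C ≤ dist (f x) (f y) := by
  simpa using (hf.2 x hx y hy).1

end IsQuasigeodesicOn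

lemma IsQuasigeodesicSubspace.mono {X : Type*} [MetricSpace X] {lam C C' : ℝ} {A : Set X}
    (hA : IsQuasigeodesicSubspace lam C A) (hC : C ≤ C') : IsQuasigeodesicSubspace lam C' A :=
  fun a ha b hb => (hA a ha b hb).imp fun _ => .imp fun _ h => ⟨h.1.mono hC, h.2⟩

lemma IsGeodesicSubspace.isQuasigeodesicSubspace {X : Type*} [MetricSpace X] {A : Set X}
    (hA : IsGeodesicSubspace A) : IsQuasigeodesicSubspace 1 0 A :=
  fun a ha b hb => (hA a ha b hb).imp fun _ => .imp fun _ h =>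
    ⟨h.1.1.isQuasigeodesicOn, h.1.2.1, h.1.2.2, h.2⟩

lemma IsGeodesicFrom.exists_quasigeodesic_of_forall_exists_dist_le {X : Type*} [MetricSpace X]
    {γ : ℝ → X} {v K : ℝ} {a b : X} {S : Set X} (hγ : IsGeodesicFrom γ v a b) (ha : a ∈ S)
    (hb : b ∈ S) (hS : ∀ x ∈ Icc 0 v, ∃ y ∈ S, dist (γ x) y ≤ K) :
    ∃ (f : ℝ → X) (w : ℝ), IsQuasigeodesicOn 1 (2 * K) f w ∧ f 0 = a ∧ f w = b ∧
      f '' Icc 0 w ⊆ S := by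
  classical
  have : Nonempty X := ⟨a⟩
  choose! F hFS hF using hS
  have hK : 0 ≤ K := dist_nonneg.trans (hF 0 (left_mem_Icc.2 hγ.1.1))
  set f : ℝ → X := fun x => if x = 0 then a else if x = v then b else F x
  have hf : ∀ x ∈ Icc 0 v, f x ∈ S ∧ dist (γ x) (f x) ≤ K := by
    intro x hx
    simp only [f]
    split_ifs with h0 hv
    · exact ⟨ha, by rw [h0, hγ.2.1, dist_self]; exact hK⟩
    · exact ⟨hb, by rw [hv, hγ.2.2, dist_self]; exact hK⟩
    · exact ⟨hFS x hx, hF x hx⟩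
  refine ⟨f, v, hγ.1.isQuasigeodesicOn_of_dist_le fun x hx => (hf x hx).2, by simp [f], ?_, ?_⟩
  · simp only [f]
    split_ifs with hv
    · rw [← dist_eq_zero, hγ.dist_eq, hv]
    · rfl
  · rintro _ ⟨x, hx, rfl⟩
    exact (hf x hx).1

lemma IsGeodesicOn.sub_le_of_isQuasigeodesicOn {X : Type*} [MetricSpace X] {g h : ℝ → X}
    {v m K x y t : ℝ} (hg : IsGeodesicOn g v) (hx : x ∈ Icc 0 v) (hy : y ∈ Icc 0 v)
    (hh : IsQuasigeodesicOn 1 K h m) (h0 : h 0 = g x) (hm : h m = g v) (ht : t ∈ Icc 0 m)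
    (hty : h t = g y) : x - y ≤ 2 * K := by
  have h₁ := hh.dist_le ht (right_mem_Icc.2 hh.1)
  have h₂ := hh.le_dist (left_mem_Icc.2 hh.1) (right_mem_Icc.2 hh.1)
  rw [hty, hm, hg.dist_right hy, abs_of_nonpos (by linarith [ht.2])] at h₁
  rw [h0, hm, hg.dist_right hx, zero_sub, abs_neg, abs_of_nonneg hh.1] at h₂
  linarith [ht.1]

namespace IsDeltaHyperbolic

variable {X : Type*} [MetricSpace X] {δ : ℝ}

lemma mono (hX : IsDeltaHyperbolic X δ) {δ' : ℝ} (h : δ ≤ δ') : IsDeltaHyperbolic X δ' :=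
  fun a b c f₁ f₂ f₃ v₁ v₂ v₃ h₁ h₂ h₃ x hx => (hX a b c f₁ f₂ f₃ v₁ v₂ v₃ h₁ h₂ h₃ x hx).trans h

lemma exists_dist_le_add_one (hX : IsDeltaHyperbolic X δ) {a b c : X} {f₁ f₂ f₃ : ℝ → X}
    {v₁ v₂ v₃ x : ℝ} (h₁ : IsGeodesicFrom f₁ v₁ a b) (h₂ : IsGeodesicFrom f₂ v₂ b c)
    (h₃ : IsGeodesicFrom f₃ v₃ a c) (hx : x ∈ Icc 0 v₂) :
    (∃ y ∈ Icc 0 v₁, dist (f₂ x) (f₁ y) ≤ δ + 1) ∨ ∃ y ∈ Icc 0 v₃, dist (f₂ x) (f₃ y) ≤ δ + 1 := by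
  have hne : (f₁ '' Icc 0 v₁ ∪ f₃ '' Icc 0 v₃).Nonempty :=
    ⟨a, Or.inl ⟨0, left_mem_Icc.2 h₁.1.1, h₁.2.1⟩⟩
  obtain ⟨z, hz, hxz⟩ := (infDist_lt_iff hne).1
    ((hX a b c f₁ f₂ f₃ v₁ v₂ v₃ h₁ h₂ h₃ x hx).trans_lt (lt_add_one δ))
  rcases hz with ⟨y, hy, rfl⟩ | ⟨y, hy, rfl⟩
  exacts [Or.inl ⟨y, hy, hxz.le⟩, Or.inr ⟨y, hy, hxz.le⟩]

lemma exists_dist_le_of_dist_add_dist_le (hX : IsDeltaHyperbolic X δ) (hδ : 0 ≤ δ)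
    (hgeo : IsGeodesicSpace X) {γ : ℝ → X} {v k : ℝ} {b c q : X} (hγ : IsGeodesicFrom γ v b c)
    (hq : dist b q + dist q c ≤ dist b c + k) : ∃ x ∈ Icc 0 v, dist q (γ x) ≤ 3 * δ + k + 4 := by
  obtain ⟨σ, s, hσ⟩ := hgeo q b
  obtain ⟨τ, r, hτ⟩ := hgeo q c
  obtain ⟨x₁, ⟨hx₁, u, hu, hx₁u⟩, x₂, ⟨hx₂, u', hu', hx₂u'⟩, hx₁₂⟩ :=
    exists_abs_sub_le_of_Icc_subset_union (P := {x | ∃ u ∈ Icc 0 s, dist (γ x) (σ u) ≤ δ + 1})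
      (Q := {x | ∃ u ∈ Icc 0 r, dist (γ x) (τ u) ≤ δ + 1}) hγ.1.1 one_pos
      ⟨s, right_mem_Icc.2 hσ.1.1, by rw [hγ.2.1, hσ.2.2, dist_self]; linarith⟩
      ⟨r, right_mem_Icc.2 hτ.1.1, by rw [hγ.2.2, hτ.2.2, dist_self]; linarith⟩
      fun x hx => hX.exists_dist_le_add_one hσ hγ hτ hx
  have hbu : dist b (σ u) = s - u := by rw [dist_comm, ← hσ.2.2, hσ.1.dist_right hu]
  have hu'c : dist (τ u') c = r - u' := by rw [← hτ.2.2, hτ.1.dist_right hu']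
  have hqu' : dist q (τ u') = u' := by rw [← hτ.2.1, hτ.1.dist_left hu']
  have hx₁x₂ : dist (γ x₁) (γ x₂) ≤ 1 := by rwa [hγ.1.dist_eq hx₁ hx₂]
  have hqb : dist b q = s := by rw [dist_comm, hσ.dist_eq]
  -- the detour `b → σ u → γ x₁ → γ x₂ → τ u' → c` is not much shorter than `dist b c`
  have hbc := dist_triangle4 b (σ u) (γ x₁) (γ x₂)
  have hbc' := dist_triangle4 b (γ x₂) (τ u') c
  rw [dist_comm (σ u)] at hbc
  rw [dist_comm (γ x₂)] at hbc'
  refine ⟨x₂, hx₂, ?_⟩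
  linarith [dist_triangle q (τ u') (γ x₂), dist_comm (τ u') (γ x₂), hτ.dist_eq, hu.1]

lemma exists_dist_le_of_isQuasigeodesicOn (hX : IsDeltaHyperbolic X δ) (hδ : 0 ≤ δ)
    (hgeo : IsGeodesicSpace X) {α g : ℝ → X} {T v C u : ℝ} {p a : X}
    (hα : IsQuasigeodesicOn 1 C α T) (hα0 : α 0 = p) (hαT : α T = a)
    (hg : IsGeodesicFrom g v p a) (hu : u ∈ Icc 0 v) :
    ∃ t ∈ Icc 0 T, dist (g u) (α t) ≤ 6 * δ + 7 * C + 9 := by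
  have h0 : (0 : ℝ) ∈ Icc 0 T := left_mem_Icc.2 hα.1
  have hT : T ∈ Icc 0 T := right_mem_Icc.2 hα.1
  obtain ⟨t, ht, htu⟩ := intermediate_value_Icc_coarse (φ := fun t => dist (α t) p) hα.1
    (fun s hs t ht => (abs_dist_sub_le _ _ _).trans (hα.dist_le hs ht))
    (by simpa [hα0] using hu.1) (by simpa [hαT, dist_comm, hg.dist_eq] using hu.2)
  have hpt : dist p (α t) ≤ t + C := by
    simpa [hα0, abs_of_nonneg ht.1] using hα.dist_le h0 ht
  have hta : dist (α t) a ≤ T - t + C := by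
    simpa [hαT, abs_sub_comm, abs_of_nonneg (sub_nonneg.2 ht.2)] using hα.dist_le ht hT
  have hpa : T - C ≤ dist p a := by
    simpa [hα0, hαT, abs_of_nonneg hα.1] using hα.le_dist h0 hT
  obtain ⟨x, hx, hxt⟩ := hX.exists_dist_le_of_dist_add_dist_le hδ hgeo hg (q := α t) (k := 3 * C)
    (by linarith)
  have hxp : dist (g x) p = x := by rw [← hg.2.1, dist_comm, hg.1.dist_left hx]
  have hφx := abs_dist_sub_le (g x) (α t) p
  rw [hxp, dist_comm (g x) (α t)] at hφx
  rw [abs_le] at htu hφx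
  have hux : dist (g u) (g x) ≤ 3 * δ + 4 * C + 5 := by
    rw [hg.1.dist_eq hu hx, abs_le]
    constructor <;> linarith
  exact ⟨t, ht, by linarith [dist_triangle (g u) (g x) (α t), dist_comm (g x) (α t)]⟩

lemma exists_mem_dist_le_of_isQuasigeodesicSubspace (hX : IsDeltaHyperbolic X δ) (hδ : 0 ≤ δ)
    (hgeo : IsGeodesicSpace X) {S : Set X} {C v u : ℝ} {p a : X} {g : ℝ → X}
    (hS : IsQuasigeodesicSubspace 1 C S) (hp : p ∈ S) (ha : a ∈ S) (hg : IsGeodesicFrom g v p a)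
    (hu : u ∈ Icc 0 v) : ∃ y ∈ S, dist (g u) y ≤ 6 * δ + 7 * C + 9 := by
  obtain ⟨α, T, hα, hα0, hαT, hαS⟩ := hS p hp a ha
  obtain ⟨t, ht, hut⟩ := hX.exists_dist_le_of_isQuasigeodesicOn hδ hgeo hα hα0 hαT hg hu
  exact ⟨α t, hαS (mem_image_of_mem α ht), hut⟩

lemma isQuasigeodesicSubspace_union (hX : IsDeltaHyperbolic X δ) (hδ : 0 ≤ δ)
    (hgeo : IsGeodesicSpace X) {A B : Set X} {C : ℝ} (hA : IsQuasigeodesicSubspace 1 C A)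
    (hB : IsQuasigeodesicSubspace 1 C B) {p : X} (hp : p ∈ A ∩ B) :
    IsQuasigeodesicSubspace 1 (2 * (7 * δ + 7 * C + 10)) (A ∪ B) := by
  intro a ha b hb
  obtain ⟨γ, v, hγ⟩ := hgeo a b
  obtain ⟨g₁, v₁, hg₁⟩ := hgeo p a
  obtain ⟨g₃, v₃, hg₃⟩ := hgeo p b
  refine hγ.exists_quasigeodesic_of_forall_exists_dist_le ha hb fun x hx => ?_
  obtain ⟨c, hc, g, w, hg, y, hy, hxy⟩ : ∃ c ∈ A ∪ B, ∃ (g : ℝ → X) (w : ℝ),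
      IsGeodesicFrom g w p c ∧ ∃ y ∈ Icc 0 w, dist (γ x) (g y) ≤ δ + 1 :=
    (hX.exists_dist_le_add_one hg₁ hγ hg₃ hx).elim (fun h => ⟨a, ha, g₁, v₁, hg₁, h⟩)
      fun h => ⟨b, hb, g₃, v₃, hg₃, h⟩
  obtain ⟨z, hz, hyz⟩ : ∃ z ∈ A ∪ B, dist (g y) z ≤ 6 * δ + 7 * C + 9 := by
    rcases hc with hc | hc
    · obtain ⟨z, hz, hyz⟩ :=
        hX.exists_mem_dist_le_of_isQuasigeodesicSubspace hδ hgeo hA hp.1 hc hg hy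
      exact ⟨z, Or.inl hz, hyz⟩
    · obtain ⟨z, hz, hyz⟩ :=
        hX.exists_mem_dist_le_of_isQuasigeodesicSubspace hδ hgeo hB hp.2 hc hg hy
      exact ⟨z, Or.inr hz, hyz⟩
  exact ⟨z, hz, by linarith [dist_triangle (γ x) (g y) z]⟩

end IsDeltaHyperbolic

lemma isDeltaHyperbolic_of_isQuasigeodesicSubspace_union {X : Type*} [MetricSpace X]
    {K₁ K₂ : ℝ} (hK₁ : 0 ≤ K₁)
    (h₁ : ∀ A B : Set X, IsQuasigeodesicSubspace 1 1 A → IsQuasigeodesicSubspace 1 1 B →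
      (A ∩ B).Nonempty → IsQuasigeodesicSubspace 1 K₁ (A ∪ B))
    (h₂ : ∀ A B : Set X, IsQuasigeodesicSubspace 1 K₁ A → IsQuasigeodesicSubspace 1 K₁ B →
      (A ∩ B).Nonempty → IsQuasigeodesicSubspace 1 K₂ (A ∪ B)) :
    IsDeltaHyperbolic X (3 * K₂) := by
  intro a b c f₁ f₂ f₃ v₁ v₂ v₃ hf₁ hf₂ hf₃ x hx
  set U := f₁ '' Icc 0 v₁ ∪ f₃ '' Icc 0 v₃
  have hseg : ∀ {f : ℝ → X} {w C : ℝ}, IsGeodesicOn f w → 0 ≤ C →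
      IsQuasigeodesicSubspace 1 C (f '' Icc 0 w) := fun hf hC =>
    hf.isGeodesicSubspace_image.isQuasigeodesicSubspace.mono hC
  have hU : IsQuasigeodesicSubspace 1 K₁ U :=
    h₁ _ _ (hseg hf₁.1 zero_le_one) (hseg hf₃.1 zero_le_one)
      ⟨a, ⟨0, left_mem_Icc.2 hf₁.1.1, hf₁.2.1⟩, ⟨0, left_mem_Icc.2 hf₃.1.1, hf₃.2.1⟩⟩
  have hW : IsQuasigeodesicSubspace 1 K₂ (f₂ '' Icc 0 x ∪ U) :=
    h₂ _ _ (hseg (hf₂.1.mono hx) hK₁) hU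
      ⟨b, ⟨0, left_mem_Icc.2 hx.1, hf₂.2.1⟩, Or.inl ⟨v₁, right_mem_Icc.2 hf₁.1.1, hf₁.2.2⟩⟩
  have hxx : f₂ x ∈ f₂ '' Icc 0 x := mem_image_of_mem f₂ (right_mem_Icc.2 hx.1)
  have hcU : c ∈ U := Or.inr ⟨v₃, right_mem_Icc.2 hf₃.1.1, hf₃.2.2⟩
  obtain ⟨h, m, hh, hh0, hhm, hhW⟩ := hW (f₂ x) (Or.inl hxx) c (Or.inr hcU)
  refine le_of_forall_pos_le_add fun ε hε => ?_
  -- where `h` jumps from `[b, f₂ x]` to `U`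
  obtain ⟨t₁, ⟨ht₁, y, hy, hyt₁⟩, t₂, ⟨ht₂, ht₂U⟩, ht₁₂⟩ :=
    exists_abs_sub_le_of_Icc_subset_union (P := h ⁻¹' (f₂ '' Icc 0 x)) (Q := h ⁻¹' U) hh.1 hε
      (show h 0 ∈ _ from hh0 ▸ hxx) (show h m ∈ U from hhm ▸ hcU)
      fun t ht => hhW (mem_image_of_mem h ht)
  have hyv : y ∈ Icc 0 v₂ := ⟨hy.1, hy.2.trans hx.2⟩
  have hback := hf₂.1.sub_le_of_isQuasigeodesicOn hx hyv hh hh0 (by rw [hhm, hf₂.2.2]) ht₁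
    hyt₁.symm
  calc infDist (f₂ x) U ≤ dist (f₂ x) (h t₂) := infDist_le_dist_of_mem ht₂U
    _ ≤ dist (f₂ x) (f₂ y) + dist (h t₁) (h t₂) := by rw [← hyt₁]; exact dist_triangle _ _ _
    _ ≤ (x - y) + (|t₁ - t₂| + K₂) := by
      rw [hf₂.1.dist_eq hx hyv, abs_of_nonneg (by linarith [hy.2])]
      exact add_le_add_right (hh.dist_le ht₁ ht₂) _
    _ ≤ 3 * K₂ + ε := by linarith

/-- A geodesic metric space is hyperbolic iff for every C > 0 there is
C' > 0 such that the union of two intersecting (1, C)-quasigeodesic subspaces is a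
(1, C')-quasigeodesic subspace. -/
theorem hyperbolic_iff_union_of_one_quasigeodesic_subspaces {X : Type*} [MetricSpace X]
    (hgeo : IsGeodesicSpace X) :
    (∃ δ : ℝ, IsDeltaHyperbolic X δ) ↔
      (∀ C : ℝ, 0 < C → ∃ C' : ℝ, 0 < C' ∧
        ∀ A B : Set X, IsQuasigeodesicSubspace 1 C A → IsQuasigeodesicSubspace 1 C B →
          (A ∩ B).Nonempty → IsQuasigeodesicSubspace 1 C' (A ∪ B)) := by
  constructor
  · rintro ⟨δ, hX⟩ C hC
    have hδ : 0 ≤ max δ 0 := le_max_right δ 0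
    refine ⟨2 * (7 * max δ 0 + 7 * C + 10), by positivity, fun A B hA hB ⟨p, hp⟩ => ?_⟩
    exact (hX.mono (le_max_left δ 0)).isQuasigeodesicSubspace_union hδ hgeo hA hB hp
  · intro H
    obtain ⟨K₁, hK₁, h₁⟩ := H 1 one_pos
    obtain ⟨K₂, -, h₂⟩ := H K₁ hK₁
    exact ⟨3 * K₂, isDeltaHyperbolic_of_isQuasigeodesicSubspace_union hK₁.le h₁ h₂⟩
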